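/- Let γ ∈ [1/2, 1), T a finite set, R₁ : T → ℝ a function whose discounted return G₁(ξ) = ∑_j γ^j R₁(ξ_j) is non-constant on T^ℕ, and α ≠ 0 a real constant. Then there is no function R₂ : T → ℝ whose discounted return G₂ satisfies G₂(ξ) = -exp(α · G₁(ξ)) for all ξ ∈ T^ℕ. -/

import Mathlib

/-!
Prepending a state `t` to a trajectory `ξ` turns a discounted return `G ξ` into `R t + γ G ξ`.
So if `G₂ = f ∘ G₁` for Markovian returns `G₁, G₂`, then
`f (R₁ t + γ a) - f (R₁ t + γ b) = γ (f a - f b)` for any two values `a, b` of `G₁`.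
For `f x = -exp (α x)` the left side is `-exp (α R₁ t) (exp (α γ a) - exp (α γ b))`,
which forces `R₁` to be constant as soon as `a ≠ b`; but then `G₁` is constant.
-/

open Real

section

variable {T : Type*}

noncomputable def discountedReturn (γ : ℝ) (R : T → ℝ) (ξ : ℕ → T) : ℝ :=
  ∑' j, γ ^ j * R (ξ j)

lemma summable_discounted [Finite T] {γ : ℝ} (hγ : |γ| < 1) (R : T → ℝ) (ξ : ℕ → T) :
    Summable fun j => γ ^ j * R (ξ j) := by
  obtain ⟨C, hC⟩ := (Set.finite_range fun t => |R t|).bddAbove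
  refine ((summable_geometric_of_lt_one (abs_nonneg γ) hγ).mul_left C).of_norm_bounded fun j => ?_
  rw [norm_mul, norm_pow, Real.norm_eq_abs, Real.norm_eq_abs, mul_comm]
  exact mul_le_mul_of_nonneg_right (hC ⟨ξ j, rfl⟩) (by positivity)

lemma discountedReturn_eq_add_tail [Finite T] {γ : ℝ} (hγ : |γ| < 1) (R : T → ℝ) (ξ : ℕ → T) :
    discountedReturn γ R ξ = R (ξ 0) + γ * discountedReturn γ R (fun n => ξ (n + 1)) := by
  unfold discountedReturn
  rw [(summable_discounted hγ R ξ).tsum_eq_zero_add, ← tsum_mul_left, pow_zero, one_mul]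
  congr 1
  exact tsum_congr fun j => by ring

lemma sub_eq_mul_sub_of_discountedReturn_eq_comp [Finite T] {γ : ℝ} (hγ : |γ| < 1)
    {R₁ R₂ : T → ℝ} {f : ℝ → ℝ} (hf : ∀ ξ, discountedReturn γ R₂ ξ = f (discountedReturn γ R₁ ξ))
    (t : T) (ξ ξ' : ℕ → T) :
    f (R₁ t + γ * discountedReturn γ R₁ ξ) - f (R₁ t + γ * discountedReturn γ R₁ ξ') =
      γ * (f (discountedReturn γ R₁ ξ) - f (discountedReturn γ R₁ ξ')) := by
  have hprepend : ∀ ζ,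
      f (R₁ t + γ * discountedReturn γ R₁ ζ) = R₂ t + γ * f (discountedReturn γ R₁ ζ) := fun ζ => by
      have h := hf fun n => Stream'.cons t ζ n
      rw [discountedReturn_eq_add_tail hγ R₂, discountedReturn_eq_add_tail hγ R₁, hf] at h
      exact h.symm
  rw [hprepend, hprepend]
  ring

lemma eq_of_exp_mul_add_sub_eq {α γ a b r s : ℝ} (hα : α ≠ 0) (hγ : γ ≠ 0) (hab : a ≠ b)
    (h : exp (α * (r + γ * a)) - exp (α * (r + γ * b)) =
      exp (α * (s + γ * a)) - exp (α * (s + γ * b))) :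
    r = s := by
  have hfactor : ∀ u, exp (α * (u + γ * a)) - exp (α * (u + γ * b)) =
      exp (α * u) * (exp (α * γ * a) - exp (α * γ * b)) := fun u => by
    rw [mul_sub, ← exp_add, ← exp_add]
    ring_nf
  have hne : exp (α * γ * a) - exp (α * γ * b) ≠ 0 :=
    sub_ne_zero.2 fun he => hab <| mul_left_cancel₀ (mul_ne_zero hα hγ) (exp_injective he)
  rw [hfactor, hfactor] at h
  exact mul_left_cancel₀ hα (exp_injective (mul_right_cancel₀ hne h))

end

/-- No Markovian reward realizes an exponential utility of a non-constant return. -/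
theorem stmt_4 (γ : ℝ) (hγ : 1/2 ≤ γ) (hγ1 : γ < 1)
    (T : Type*) [Fintype T]
    (R₁ : T → ℝ) (α : ℝ) (hα : α ≠ 0)
    (hnc : ¬ ∀ ξ ξ' : ℕ → T,
      (∑' j : ℕ, γ^j * R₁ (ξ j)) = ∑' j : ℕ, γ^j * R₁ (ξ' j)) :
    ¬ ∃ R₂ : T → ℝ, ∀ ξ : ℕ → T,
      (∑' j : ℕ, γ^j * R₂ (ξ j)) = -Real.exp (α * ∑' j : ℕ, γ^j * R₁ (ξ j)) := by
  rintro ⟨R₂, hR₂⟩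
  simp only [not_forall] at hnc
  obtain ⟨ξ, ξ', hne⟩ := hnc
  change discountedReturn γ R₁ ξ ≠ discountedReturn γ R₁ ξ' at hne
  have hγabs : |γ| < 1 := abs_lt.2 ⟨by linarith, hγ1⟩
  have hγ0 : γ ≠ 0 := by linarith
  have hconsistent := sub_eq_mul_sub_of_discountedReturn_eq_comp hγabs
    (f := fun x => -exp (α * x)) hR₂ (ξ := ξ) (ξ' := ξ')
  have hR₁ : ∀ t s, R₁ t = R₁ s := fun t s =>
    eq_of_exp_mul_add_sub_eq hα hγ0 hne (by linarith [hconsistent t, hconsistent s])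
  exact hne (tsum_congr fun j => by rw [hR₁ (ξ j) (ξ' j)])
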